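/- arXiv:2004.07147 — 10 statements merged into one kernel-verified Lean document; each statement's English description precedes it below -/
import Mathlib

section
/- Let H be a triangle-free graph on m vertices that contains an independent set of size d, where d ≥ m/2. Then H has at most d(m-d) edges. -/
open Finset

/-- A triangle-free graph on `m` vertices with an independent set of size `d ≥ m/2`
has at most `d(m-d)` edges. -/
theorem stmt_0 {V : Type*} [Fintype V] [DecidableEq V] (H : SimpleGraph V)
    [DecidableRel H.Adj] (hH : H.CliqueFree 3)
    (m d : ℕ) (hm : m = Fintype.card V)
    (s : Finset V) (hindep : ∀ a ∈ s, ∀ b ∈ s, a ≠ b → ¬ H.Adj a b)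
    (hd : d = s.card) (hhalf : m ≤ 2 * d) :
    H.edgeFinset.card ≤ d * (m - d) := by
  classical
  subst hd hm
  set d := s.card with hd
  by_cases hs : s.Nonempty
  swap
  · rw [Finset.not_nonempty_iff_eq_empty] at hs
    subst hs
    have hd0 : d = 0 := by simp [hd]
    have hV : Fintype.card V = 0 := by omega
    have : IsEmpty V := Fintype.card_eq_zero_iff.mp hV
    have : H.edgeFinset = ∅ := by
      apply Finset.eq_empty_of_forall_notMem
      intro e _
      exact e.ind (fun x _ => (IsEmpty.false x).elim)
    simp [this]
  -- main case
  obtain ⟨u, hu, hmax⟩ := s.exists_max_image (fun v => H.degree v) hs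
  set t := H.degree u with ht
  -- neighbors of u avoid s
  have hNs : H.neighborFinset u ⊆ sᶜ := by
    intro w hw
    rw [SimpleGraph.mem_neighborFinset] at hw
    rw [Finset.mem_compl]
    intro hws
    exact hindep u hu w hws hw.ne hw
  set C : Finset V := sᶜ \ H.neighborFinset u with hC
  set b := (sᶜ : Finset V).card with hb
  have htb : t ≤ b := by
    rw [ht, ← SimpleGraph.card_neighborFinset_eq_degree]
    exact Finset.card_le_card hNs
  have hCcard : C.card = b - t := by
    rw [hC, Finset.card_sdiff_of_subset hNs, SimpleGraph.card_neighborFinset_eq_degree]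
  have hbd : b ≤ d := by
    rw [hb, Finset.card_compl]
    omega
  -- the covering
  have hcover : H.edgeFinset ⊆
      (s.biUnion (fun v => H.incidenceFinset v)) ∪
      (C.biUnion (fun v => (H.neighborFinset v ∩ sᶜ).image (fun w => s(v, w)))) := by
    intro e he
    induction e using Sym2.ind with
    | _ x y =>
      rw [SimpleGraph.mem_edgeFinset, SimpleGraph.mem_edgeSet] at he
      by_cases hx : x ∈ s
      · refine Finset.mem_union_left _ (Finset.mem_biUnion.mpr ⟨x, hx, ?_⟩)
        rw [SimpleGraph.mem_incidenceFinset]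
        exact H.mk'_mem_incidenceSet_left_iff.mpr he
      by_cases hy : y ∈ s
      · refine Finset.mem_union_left _ (Finset.mem_biUnion.mpr ⟨y, hy, ?_⟩)
        rw [SimpleGraph.mem_incidenceFinset]
        exact H.mk'_mem_incidenceSet_right_iff.mpr he
      -- both in sᶜ; one of them not adjacent to u
      have hxy : ¬ (H.Adj u x ∧ H.Adj u y) := by
        rintro ⟨h1, h2⟩
        exact hH {u, x, y} (SimpleGraph.is3Clique_triple_iff.mpr ⟨h1, h2, he⟩)
      by_cases hux : H.Adj u x
      · have huy : ¬ H.Adj u y := fun h => hxy ⟨hux, h⟩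
        refine Finset.mem_union_right _ (Finset.mem_biUnion.mpr ⟨y, ?_, ?_⟩)
        · rw [hC, Finset.mem_sdiff, Finset.mem_compl, SimpleGraph.mem_neighborFinset]
          exact ⟨hy, huy⟩
        · rw [Sym2.eq_swap]
          exact Finset.mem_image.mpr ⟨x, by
            rw [Finset.mem_inter, SimpleGraph.mem_neighborFinset, Finset.mem_compl]
            exact ⟨he.symm, hx⟩, rfl⟩
      · refine Finset.mem_union_right _ (Finset.mem_biUnion.mpr ⟨x, ?_, ?_⟩)
        · rw [hC, Finset.mem_sdiff, Finset.mem_compl, SimpleGraph.mem_neighborFinset]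
          exact ⟨hx, hux⟩
        · exact Finset.mem_image.mpr ⟨y, by
            rw [Finset.mem_inter, SimpleGraph.mem_neighborFinset, Finset.mem_compl]
            exact ⟨he, hy⟩, rfl⟩
  have h1 : (s.biUnion (fun v => H.incidenceFinset v)).card ≤ d * t := by
    calc (s.biUnion (fun v => H.incidenceFinset v)).card
        ≤ ∑ v ∈ s, (H.incidenceFinset v).card := Finset.card_biUnion_le
      _ ≤ ∑ v ∈ s, t := by
          apply Finset.sum_le_sum
          intro v hv
          rw [SimpleGraph.card_incidenceFinset_eq_degree]
          exact hmax v hv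
      _ = d * t := by rw [Finset.sum_const, smul_eq_mul]
  have h2 : (C.biUnion (fun v => (H.neighborFinset v ∩ sᶜ).image (fun w => s(v, w)))).card
      ≤ (b - t) * d := by
    calc (C.biUnion (fun v => (H.neighborFinset v ∩ sᶜ).image (fun w => s(v, w)))).card
        ≤ ∑ v ∈ C, ((H.neighborFinset v ∩ sᶜ).image (fun w => s(v, w))).card :=
          Finset.card_biUnion_le
      _ ≤ ∑ v ∈ C, d := by
          apply Finset.sum_le_sum
          intro v hv
          calc ((H.neighborFinset v ∩ sᶜ).image (fun w => s(v, w))).card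
              ≤ (H.neighborFinset v ∩ sᶜ).card := Finset.card_image_le
            _ ≤ (sᶜ : Finset V).card := Finset.card_le_card Finset.inter_subset_right
            _ ≤ d := hbd
      _ = (b - t) * d := by rw [Finset.sum_const, smul_eq_mul, hCcard]
  have hbm : b = Fintype.card V - d := by rw [hb, Finset.card_compl]
  calc H.edgeFinset.card
      ≤ ((s.biUnion (fun v => H.incidenceFinset v)) ∪
        (C.biUnion (fun v => (H.neighborFinset v ∩ sᶜ).image (fun w => s(v, w))))).card :=
        Finset.card_le_card hcover
    _ ≤ (s.biUnion (fun v => H.incidenceFinset v)).card +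
        (C.biUnion (fun v => (H.neighborFinset v ∩ sᶜ).image (fun w => s(v, w)))).card :=
        Finset.card_union_le _ _
    _ ≤ d * t + (b - t) * d := Nat.add_le_add h1 h2
    _ = b * d := by rw [Nat.mul_comm d t, ← Nat.add_mul, Nat.add_sub_cancel' htb]
    _ = d * (Fintype.card V - d) := by rw [hbm, Nat.mul_comm]
end

section
/- Let G be a red/blue edge-colored graph avoiding handles and non-monochromatic triangles, and let v be a vertex of G. Form G' by adding a new vertex v' adjacent to exactly the neighbors of v, with each edge {v', x} given the same color as {v, x} (v and v' are not adjacent). Then G' also avoids handles and non-monochromatic triangles. -/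
/-- The graph obtained from `R` by cloning the vertex `v`: a new vertex (the `none` of
`Option V`) is adjacent to exactly the neighbors of `v`, and not to `v` itself. -/
def cloneAt {V : Type*} (R : SimpleGraph V) (v : V) : SimpleGraph (Option V) where
  Adj a b :=
    (∃ x y, a = some x ∧ b = some y ∧ R.Adj x y) ∨
    (∃ x, a = some x ∧ b = none ∧ R.Adj x v) ∨
    (∃ y, a = none ∧ b = some y ∧ R.Adj v y)
  symm := by
    refine ⟨?_⟩
    rintro a b (⟨x, y, rfl, rfl, h⟩ | ⟨x, rfl, rfl, h⟩ | ⟨y, rfl, rfl, h⟩)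
    · exact Or.inl ⟨y, x, rfl, rfl, h.symm⟩
    · exact Or.inr (Or.inr ⟨x, rfl, rfl, h.symm⟩)
    · exact Or.inr (Or.inl ⟨y, rfl, rfl, h.symm⟩)
  loopless := by
    refine ⟨?_⟩
    rintro a (⟨x, y, rfl, h1, h⟩ | ⟨x, rfl, h1, h⟩ | ⟨y, h1, rfl, h⟩)
    · obtain rfl := Option.some.inj h1
      exact R.loopless.irrefl _ h
    · exact Option.some_ne_none _ h1
    · exact Option.some_ne_none _ h1

/-- A red/blue edge-colored graph `(R, B)` avoids handles and non-monochromatic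
triangles. -/
def Avoids {V : Type*} (R B : SimpleGraph V) : Prop :=
  (∀ a b c : V, (R ⊔ B).Adj a b → (R ⊔ B).Adj b c → (R ⊔ B).Adj a c →
    (R.Adj a b ∧ R.Adj b c ∧ R.Adj a c) ∨ (B.Adj a b ∧ B.Adj b c ∧ B.Adj a c)) ∧
  (∀ a b c x : V, R.Adj a b → R.Adj b c → R.Adj a c → ¬ B.Adj a x) ∧
  (∀ a b c x : V, B.Adj a b → B.Adj b c → B.Adj a c → ¬ R.Adj a x)

/-! Sending the clone back to `v` maps each colour class of the cloned graph homomorphically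
onto the same colour class of the original, so a handle or a triangle upstairs projects to one
downstairs; and since the colour of an edge upstairs is the colour of its image, the
monochromatic triangles downstairs lift back to monochromatic ones. -/

section cloneAt

variable {V : Type*} (R B : SimpleGraph V) (v : V)

theorem cloneAt_adj_iff (a b : Option V) :
    (cloneAt R v).Adj a b ↔ (a ≠ none ∨ b ≠ none) ∧ R.Adj (a.getD v) (b.getD v) := by
  cases a <;> cases b <;> simp [cloneAt, SimpleGraph.irrefl]

theorem cloneAt_sup : cloneAt (R ⊔ B) v = cloneAt R v ⊔ cloneAt B v := by
  ext a b
  simp only [SimpleGraph.sup_adj, cloneAt_adj_iff, and_or_left]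

def cloneAtHom : cloneAt R v →g R where
  toFun a := a.getD v
  map_rel' h := ((cloneAt_adj_iff R v _ _).1 h).2

variable {R B v}

theorem cloneAt_adj_of_adj_getD {a b : Option V} (hab : (cloneAt B v).Adj a b)
    (h : R.Adj (a.getD v) (b.getD v)) : (cloneAt R v).Adj a b :=
  (cloneAt_adj_iff R v a b).2 ⟨((cloneAt_adj_iff B v a b).1 hab).1, h⟩

end cloneAt

theorem stmt_5_general {V : Type*} (R B : SimpleGraph V)
    (h : Avoids R B) (v : V) :
    Avoids (cloneAt R v) (cloneAt B v) := by
  obtain ⟨hmono, hred, hblue⟩ := h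
  refine ⟨fun a b c hab hbc hac => ?_, fun a b c x hab hbc hac hax => ?_,
    fun a b c x hab hbc hac hax => ?_⟩
  · rw [← cloneAt_sup] at hab hbc hac
    let π := cloneAtHom (R ⊔ B) v
    rcases hmono _ _ _ (π.map_adj hab) (π.map_adj hbc) (π.map_adj hac) with
      ⟨hab', hbc', hac'⟩ | ⟨hab', hbc', hac'⟩
    · exact Or.inl ⟨cloneAt_adj_of_adj_getD hab hab', cloneAt_adj_of_adj_getD hbc hbc',
        cloneAt_adj_of_adj_getD hac hac'⟩
    · exact Or.inr ⟨cloneAt_adj_of_adj_getD hab hab', cloneAt_adj_of_adj_getD hbc hbc',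
        cloneAt_adj_of_adj_getD hac hac'⟩
  · let πR := cloneAtHom R v
    exact hred _ _ _ _ (πR.map_adj hab) (πR.map_adj hbc) (πR.map_adj hac)
      ((cloneAtHom B v).map_adj hax)
  · let πB := cloneAtHom B v
    exact hblue _ _ _ _ (πB.map_adj hab) (πB.map_adj hbc) (πB.map_adj hac)
      ((cloneAtHom R v).map_adj hax)

/-- Cloning a vertex preserves the absence of handles and non-monochromatic triangles. -/
theorem stmt_5 {V : Type*} (R B : SimpleGraph V)
    (hdisj : ∀ x y : V, ¬ (R.Adj x y ∧ B.Adj x y))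
    (h : Avoids R B) (v : V) :
    Avoids (cloneAt R v) (cloneAt B v) :=
  stmt_5_general R B h v
end

section
/- Let G be a red/blue edge-colored graph with no handle and no non-monochromatic triangle, let M be the set of vertices incident to at least one red edge and at least one blue edge, and suppose |M| = m. Then the number of edges of G with both endpoints in M is at most m²/4. -/
open Finset

lemma mantel_aux {V : Type*} [Fintype V] [DecidableEq V] (G : SimpleGraph V)
    [DecidableRel G.Adj] (h : G.CliqueFree 3) :
    4 * G.edgeFinset.card ≤ Fintype.card V ^ 2 := by
  set n := Fintype.card V with hn
  set E := G.edgeFinset.card with hE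
  have hdeg : ∀ u v : V, G.Adj u v → G.degree u + G.degree v ≤ n := by
    intro u v huv
    have hdisj : Disjoint (G.neighborFinset u) (G.neighborFinset v) := by
      rw [Finset.disjoint_left]
      intro w hwu hwv
      rw [SimpleGraph.mem_neighborFinset] at hwu hwv
      exact h _ (SimpleGraph.is3Clique_triple_iff.mpr ⟨huv, hwu, hwv⟩)
    calc G.degree u + G.degree v
        = (G.neighborFinset u ∪ G.neighborFinset v).card := by
          rw [Finset.card_union_of_disjoint hdisj,
            SimpleGraph.card_neighborFinset_eq_degree,
            SimpleGraph.card_neighborFinset_eq_degree]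
      _ ≤ (Finset.univ : Finset V).card := Finset.card_le_card (Finset.subset_univ _)
      _ = n := Finset.card_univ
  have hsum : ∑ v, G.degree v = 2 * E := G.sum_degrees_eq_twice_card_edges
  have hswap : ∑ v, ∑ u ∈ G.neighborFinset v, G.degree u = ∑ v, G.degree v ^ 2 := by
    have h1 : ∀ v : V, ∑ u ∈ G.neighborFinset v, G.degree u
        = ∑ u : V, if G.Adj v u then G.degree u else 0 := by
      intro v
      rw [SimpleGraph.neighborFinset_eq_filter, Finset.sum_filter]
    simp_rw [h1]
    rw [Finset.sum_comm]
    have h2 : ∀ u : V, (∑ v : V, if G.Adj v u then G.degree u else 0) = G.degree u ^ 2 := by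
      intro u
      have hf : (Finset.univ.filter (fun v => G.Adj v u)) = G.neighborFinset u := by
        ext w; simp [SimpleGraph.adj_comm]
      rw [← Finset.sum_filter, hf, Finset.sum_const, smul_eq_mul,
        SimpleGraph.card_neighborFinset_eq_degree, sq]
    simp_rw [h2]
  have hkey : 2 * ∑ v, G.degree v ^ 2 ≤ 2 * E * n := by
    calc 2 * ∑ v, G.degree v ^ 2
        = ∑ v, ∑ u ∈ G.neighborFinset v, (G.degree u + G.degree v) := by
          simp_rw [Finset.sum_add_distrib, Finset.sum_const, smul_eq_mul,
            SimpleGraph.card_neighborFinset_eq_degree]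
          rw [hswap, two_mul]
          simp [sq]
      _ ≤ ∑ v, ∑ u ∈ G.neighborFinset v, n := by
          refine Finset.sum_le_sum fun v _ => Finset.sum_le_sum fun u hu => ?_
          rw [SimpleGraph.mem_neighborFinset] at hu
          rw [Nat.add_comm]
          exact hdeg v u hu
      _ = ∑ v, G.degree v * n := by
          simp [Finset.sum_const, SimpleGraph.card_neighborFinset_eq_degree, smul_eq_mul]
      _ = 2 * E * n := by rw [← Finset.sum_mul, hsum]
  have hcheb : (∑ v, G.degree v) ^ 2 ≤ n * ∑ v, G.degree v ^ 2 := by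
    simpa using sq_sum_le_card_mul_sum_sq (s := (Finset.univ : Finset V))
      (f := fun v => (G.degree v : ℕ))
  have h4 : 4 * E ^ 2 ≤ n ^ 2 * E := by
    have h1 : (2 * E) ^ 2 ≤ n * (E * n) := by
      refine hcheb.trans_eq' (by rw [hsum]) |>.trans ?_
      have : ∑ v, G.degree v ^ 2 ≤ E * n := by
        rw [mul_assoc] at hkey
        exact Nat.le_of_mul_le_mul_left hkey two_pos
      exact Nat.mul_le_mul_left n this
    nlinarith
  rcases Nat.eq_zero_or_pos E with h0 | h0
  · simp [h0]
  · have := Nat.le_of_mul_le_mul_right (by nlinarith : 4 * E * E ≤ n ^ 2 * E) h0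
    exact this

/-- In a red/blue edge-colored graph with no handle and no non-monochromatic triangle,
if `M` is the set of vertices incident to both a red and a blue edge, then the number
of edges with both endpoints in `M` is at most `|M|²/4`. -/
theorem stmt_6 {V : Type*} [Fintype V] [DecidableEq V] (R B : SimpleGraph V)
    [DecidableRel R.Adj] [DecidableRel B.Adj]
    (hdisj : ∀ x y : V, ¬ (R.Adj x y ∧ B.Adj x y))
    (hNoNonMono : ∀ a b c : V, (R ⊔ B).Adj a b → (R ⊔ B).Adj b c → (R ⊔ B).Adj a c →
      (R.Adj a b ∧ R.Adj b c ∧ R.Adj a c) ∨ (B.Adj a b ∧ B.Adj b c ∧ B.Adj a c))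
    (hNoHandleR : ∀ a b c x : V, R.Adj a b → R.Adj b c → R.Adj a c → ¬ B.Adj a x)
    (hNoHandleB : ∀ a b c x : V, B.Adj a b → B.Adj b c → B.Adj a c → ¬ R.Adj a x)
    (M : Finset V)
    (hM : ∀ v : V, v ∈ M ↔ (∃ x, R.Adj v x) ∧ (∃ y, B.Adj v y))
    (m : ℕ) (hm : m = M.card) :
    4 * ((R ⊔ B).edgeFinset.filter (fun e => ∀ v ∈ e, v ∈ M)).card ≤ m ^ 2 := by
  classical
  set H : SimpleGraph ↥M := (R ⊔ B).comap (Subtype.val : ↥M → V) with hH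
  have hHadj : ∀ a b : ↥M, H.Adj a b ↔ (R ⊔ B).Adj ↑a ↑b := fun a b => Iff.rfl
  have hcf : H.CliqueFree 3 := by
    intro s hs
    rw [SimpleGraph.is3Clique_iff] at hs
    obtain ⟨a, b, c, hab, hac, hbc, rfl⟩ := hs
    rcases hNoNonMono ↑a ↑b ↑c hab hbc hac with ⟨rab, rbc, rac⟩ | ⟨bab, bbc, bac⟩
    · obtain ⟨-, y, hy⟩ := (hM ↑a).mp a.2
      exact hNoHandleR ↑a ↑b ↑c y rab rbc rac hy
    · obtain ⟨⟨y, hy⟩, -⟩ := (hM ↑a).mp a.2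
      exact hNoHandleB ↑a ↑b ↑c y bab bbc bac hy
  have hcard : ((R ⊔ B).edgeFinset.filter (fun e => ∀ v ∈ e, v ∈ M)).card
      = H.edgeFinset.card := by
    symm
    refine Finset.card_bij (fun e _ => Sym2.map Subtype.val e) ?_ ?_ ?_
    · intro e he
      induction e with
      | _ x y =>
        rw [SimpleGraph.mem_edgeFinset, SimpleGraph.mem_edgeSet] at he
        show Sym2.map Subtype.val s(x, y) ∈ _
        rw [Sym2.map_pair_eq, Finset.mem_filter, SimpleGraph.mem_edgeFinset,
          SimpleGraph.mem_edgeSet]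
        refine ⟨he, ?_⟩
        intro v hv
        rw [Sym2.mem_iff] at hv
        rcases hv with rfl | rfl
        · exact x.2
        · exact y.2
    · intro e₁ h₁ e₂ h₂ h
      exact Sym2.map.injective Subtype.val_injective h
    · intro e he
      rw [Finset.mem_filter] at he
      obtain ⟨he1, he2⟩ := he
      induction e with
      | _ x y =>
        rw [SimpleGraph.mem_edgeFinset, SimpleGraph.mem_edgeSet] at he1
        have hx : x ∈ M := he2 x (Sym2.mem_mk_left x y)
        have hy : y ∈ M := he2 y (Sym2.mem_mk_right x y)
        refine ⟨s(⟨x, hx⟩, ⟨y, hy⟩), ?_, ?_⟩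
        · rw [SimpleGraph.mem_edgeFinset, SimpleGraph.mem_edgeSet]
          exact he1
        · show Sym2.map Subtype.val s(⟨x, hx⟩, ⟨y, hy⟩) = s(x, y)
          rw [Sym2.map_pair_eq]
  have hmantel := mantel_aux H hcf
  rw [hcard, hm, ← Fintype.card_coe M]
  exact hmantel
end

section
/- Let G be a red/blue edge-colored graph with no handle and no non-monochromatic triangle. Let R be the set of vertices incident only to red edges (and to at least one edge), and let M be the set of vertices incident to edges of both colors. If u and v are adjacent vertices both lying in R, then u and v have no common neighbor in M. -/
/-- In a red/blue edge-colored graph with no handle and no non-monochromatic triangle,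
two adjacent vertices incident only to red edges have no common neighbor among the
vertices incident to both colors. -/
theorem stmt_7 {V : Type*} (R B : SimpleGraph V)
    (hdisj : ∀ x y : V, ¬ (R.Adj x y ∧ B.Adj x y))
    (hNoNonMono : ∀ a b c : V, (R ⊔ B).Adj a b → (R ⊔ B).Adj b c → (R ⊔ B).Adj a c →
      (R.Adj a b ∧ R.Adj b c ∧ R.Adj a c) ∨ (B.Adj a b ∧ B.Adj b c ∧ B.Adj a c))
    (hNoHandleR : ∀ a b c x : V, R.Adj a b → R.Adj b c → R.Adj a c → ¬ B.Adj a x)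
    (hNoHandleB : ∀ a b c x : V, B.Adj a b → B.Adj b c → B.Adj a c → ¬ R.Adj a x)
    (u v : V) (huv : (R ⊔ B).Adj u v)
    (hu : (∃ x, R.Adj u x) ∧ ∀ y, ¬ B.Adj u y)
    (hv : (∃ x, R.Adj v x) ∧ ∀ y, ¬ B.Adj v y) :
    ¬ ∃ w : V, ((∃ x, R.Adj w x) ∧ (∃ y, B.Adj w y)) ∧
      (R ⊔ B).Adj u w ∧ (R ⊔ B).Adj v w := by
  rintro ⟨w, ⟨_, y, hwy⟩, huw, hvw⟩
  have hRuw : R.Adj u w := huw.resolve_right (fun h => hu.2 w h)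
  have hRvw : R.Adj v w := hvw.resolve_right (fun h => hv.2 w h)
  have hRuv : R.Adj u v := huv.resolve_right (fun h => hu.2 v h)
  exact hNoHandleR w u v y hRuw.symm hRuv hRvw.symm hwy
end

section
/- Let G be a graph on n vertices whose edges are colored red and blue. If G has at least (9/10)·n²/2 edges and each color class spans at most n²/4 edges, then for n sufficiently large G contains a non-monochromatic triangle. -/
open Finset

variable {V : Type} [Fintype V] [DecidableEq V]

private lemma nat_cs {α : Type*} (s : Finset α) (f : α → ℕ) :
    (∑ i ∈ s, f i) ^ 2 ≤ s.card * ∑ i ∈ s, f i ^ 2 := by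
  have h : 2 * (∑ i ∈ s, f i) ^ 2 ≤ 2 * (s.card * ∑ i ∈ s, f i ^ 2) := by
    calc 2 * (∑ i ∈ s, f i) ^ 2 = ∑ i ∈ s, ∑ j ∈ s, 2 * (f i * f j) := by
          rw [sq, Finset.sum_mul_sum]
          simp [Finset.mul_sum]
      _ ≤ ∑ i ∈ s, ∑ j ∈ s, (f i ^ 2 + f j ^ 2) := by
          refine Finset.sum_le_sum fun i _ => Finset.sum_le_sum fun j _ => ?_
          nlinarith [sq_nonneg (f i - (f j:ℤ))]
      _ = 2 * (s.card * ∑ i ∈ s, f i ^ 2) := by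
          simp only [Finset.sum_add_distrib, Finset.sum_const, smul_eq_mul,
            ← Finset.sum_mul, Finset.mul_sum]
          conv_rhs => rw [← Finset.mul_sum, ← Finset.mul_sum]
          rw [← Finset.mul_sum]
          ring
  omega

private lemma tri_eq (G : SimpleGraph V) [DecidableRel G.Adj] :
    (∑ a : V, ∑ b : V, ∑ c : V,
        if G.Adj a b ∧ G.Adj a c ∧ G.Adj b c then 1 else 0) =
      ∑ a : V, ∑ b ∈ G.neighborFinset a,
        (G.neighborFinset a ∩ G.neighborFinset b).card := by
  refine Finset.sum_congr rfl fun a _ => ?_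
  have : ∀ b : V, (∑ c : V, if G.Adj a b ∧ G.Adj a c ∧ G.Adj b c then 1 else 0)
      = if G.Adj a b then (G.neighborFinset a ∩ G.neighborFinset b).card else 0 := by
    intro b
    by_cases h : G.Adj a b
    · simp only [h, true_and, if_true]
      rw [Finset.card_eq_sum_ones, ← Finset.sum_filter]
      congr 1
      ext c
      simp [SimpleGraph.mem_neighborFinset]
    · simp [h]
  rw [Finset.sum_congr rfl fun b _ => this b, ← Finset.sum_filter]
  congr 1
  ext b
  simp [SimpleGraph.mem_neighborFinset]

private lemma tri_lower (G : SimpleGraph V) [DecidableRel G.Adj] :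
    8 * G.edgeFinset.card ^ 2 ≤
      Fintype.card V * (∑ a : V, ∑ b ∈ G.neighborFinset a,
        (G.neighborFinset a ∩ G.neighborFinset b).card)
      + 2 * G.edgeFinset.card * Fintype.card V ^ 2 := by
  set n := Fintype.card V with hn
  set e := G.edgeFinset.card with he
  set T := ∑ a : V, ∑ b ∈ G.neighborFinset a,
      (G.neighborFinset a ∩ G.neighborFinset b).card with hT
  have hdeg : ∑ v : V, G.degree v = 2 * e := G.sum_degrees_eq_twice_card_edges
  -- pointwise: deg a + deg b ≤ codeg + n
  have hpt : ∀ a b : V, G.degree a + G.degree b ≤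
      (G.neighborFinset a ∩ G.neighborFinset b).card + n := by
    intro a b
    have h1 := Finset.card_union_add_card_inter (G.neighborFinset a) (G.neighborFinset b)
    have h2 : (G.neighborFinset a ∪ G.neighborFinset b).card ≤ n := Finset.card_le_univ _
    rw [SimpleGraph.card_neighborFinset_eq_degree, SimpleGraph.card_neighborFinset_eq_degree] at h1
    omega
  -- sum of degrees over ordered adjacent pairs = 2 * sum of squares
  have hswap : (∑ a : V, ∑ b ∈ G.neighborFinset a, G.degree b)
      = ∑ b : V, G.degree b ^ 2 := by
    have : (∑ a : V, ∑ b ∈ G.neighborFinset a, G.degree b)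
        = ∑ a : V, ∑ b : V, if G.Adj a b then G.degree b else 0 := by
      refine Finset.sum_congr rfl fun a _ => ?_
      rw [← Finset.sum_filter]
      congr 1; ext b; simp [SimpleGraph.mem_neighborFinset]
    rw [this, Finset.sum_comm]
    refine Finset.sum_congr rfl fun b _ => ?_
    have : (∑ a : V, if G.Adj a b then G.degree b else 0)
        = (Finset.univ.filter fun a => G.Adj a b).card * G.degree b := by
      rw [← Finset.sum_filter, Finset.sum_const, smul_eq_mul]
    rw [this]
    have : (Finset.univ.filter fun a => G.Adj a b) = G.neighborFinset b := by
      ext a; simp [SimpleGraph.mem_neighborFinset, G.adj_comm]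
    rw [this, SimpleGraph.card_neighborFinset_eq_degree, sq]
  have hsumdd : (∑ a : V, ∑ b ∈ G.neighborFinset a, (G.degree a + G.degree b))
      = 2 * ∑ v : V, G.degree v ^ 2 := by
    have : (∑ a : V, ∑ b ∈ G.neighborFinset a, (G.degree a + G.degree b))
        = (∑ a : V, ∑ b ∈ G.neighborFinset a, G.degree a)
          + ∑ a : V, ∑ b ∈ G.neighborFinset a, G.degree b := by
      rw [← Finset.sum_add_distrib]
      exact Finset.sum_congr rfl fun a _ => by rw [← Finset.sum_add_distrib]
    rw [this, hswap]
    have : (∑ a : V, ∑ _b ∈ G.neighborFinset a, G.degree a)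
        = ∑ a : V, G.degree a ^ 2 := by
      refine Finset.sum_congr rfl fun a _ => ?_
      rw [Finset.sum_const, smul_eq_mul, SimpleGraph.card_neighborFinset_eq_degree, sq]
    rw [this]; ring
  -- bound the pair-sum from above by T + 2 e n
  have hbound : (∑ a : V, ∑ b ∈ G.neighborFinset a, (G.degree a + G.degree b))
      ≤ T + 2 * e * n := by
    calc (∑ a : V, ∑ b ∈ G.neighborFinset a, (G.degree a + G.degree b))
        ≤ ∑ a : V, ∑ b ∈ G.neighborFinset a,
            ((G.neighborFinset a ∩ G.neighborFinset b).card + n) :=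
          Finset.sum_le_sum fun a _ => Finset.sum_le_sum fun b _ => hpt a b
      _ = T + ∑ a : V, (G.neighborFinset a).card * n := by
          rw [hT, ← Finset.sum_add_distrib]
          refine Finset.sum_congr rfl fun a _ => ?_
          rw [Finset.sum_add_distrib, Finset.sum_const, smul_eq_mul]
      _ = T + 2 * e * n := by
          congr 1
          rw [← Finset.sum_mul]
          have : (∑ a : V, (G.neighborFinset a).card) = 2 * e := by
            rw [← hdeg]
            exact Finset.sum_congr rfl fun a _ =>
              SimpleGraph.card_neighborFinset_eq_degree _ _
          rw [this]
  have hcs : (2 * e) ^ 2 ≤ n * ∑ v : V, G.degree v ^ 2 := by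
    have := nat_cs Finset.univ (fun v => G.degree v)
    rwa [hdeg, Finset.card_univ, ← hn] at this
  nlinarith [hsumdd, hbound, hcs]

private lemma tri_upper (G : SimpleGraph V) [DecidableRel G.Adj] :
    (∑ a : V, ∑ b ∈ G.neighborFinset a,
        (G.neighborFinset a ∩ G.neighborFinset b).card) ^ 2
      ≤ 8 * G.edgeFinset.card ^ 3 := by
  set e := G.edgeFinset.card with he
  have hdeg : ∑ v : V, G.degree v = 2 * e := G.sum_degrees_eq_twice_card_edges
  set s : Finset ((_ : V) × V) := Finset.univ.sigma (fun a => G.neighborFinset a) with hs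
  have hcard : s.card = 2 * e := by
    rw [hs, Finset.card_sigma, ← hdeg]
    exact Finset.sum_congr rfl fun a _ => SimpleGraph.card_neighborFinset_eq_degree _ _
  have hrw : (∑ a : V, ∑ b ∈ G.neighborFinset a,
      (G.neighborFinset a ∩ G.neighborFinset b).card)
      = ∑ p ∈ s, (G.neighborFinset p.1 ∩ G.neighborFinset p.2).card := by
    rw [hs, Finset.sum_sigma]
  have hcs := nat_cs s (fun p => (G.neighborFinset p.1 ∩ G.neighborFinset p.2).card)
  have hptsq : ∀ p : (_ : V) × V,
      (G.neighborFinset p.1 ∩ G.neighborFinset p.2).card ^ 2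
        ≤ G.degree p.1 * G.degree p.2 := by
    intro p
    have h1 : (G.neighborFinset p.1 ∩ G.neighborFinset p.2).card ≤ G.degree p.1 := by
      rw [← SimpleGraph.card_neighborFinset_eq_degree]
      exact Finset.card_le_card Finset.inter_subset_left
    have h2 : (G.neighborFinset p.1 ∩ G.neighborFinset p.2).card ≤ G.degree p.2 := by
      rw [← SimpleGraph.card_neighborFinset_eq_degree]
      exact Finset.card_le_card Finset.inter_subset_right
    calc (G.neighborFinset p.1 ∩ G.neighborFinset p.2).card ^ 2
        = (G.neighborFinset p.1 ∩ G.neighborFinset p.2).card *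
          (G.neighborFinset p.1 ∩ G.neighborFinset p.2).card := sq _
      _ ≤ G.degree p.1 * G.degree p.2 := Nat.mul_le_mul h1 h2
  have hsum2 : (∑ p ∈ s, (G.neighborFinset p.1 ∩ G.neighborFinset p.2).card ^ 2)
      ≤ (2 * e) * (2 * e) := by
    calc (∑ p ∈ s, (G.neighborFinset p.1 ∩ G.neighborFinset p.2).card ^ 2)
        ≤ ∑ p ∈ s, G.degree p.1 * G.degree p.2 :=
          Finset.sum_le_sum fun p _ => hptsq p
      _ = ∑ a : V, ∑ b ∈ G.neighborFinset a, G.degree a * G.degree b := by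
          rw [hs, Finset.sum_sigma]
      _ ≤ ∑ a : V, G.degree a * (2 * e) := by
          refine Finset.sum_le_sum fun a _ => ?_
          rw [← Finset.mul_sum]
          refine Nat.mul_le_mul_left _ ?_
          calc (∑ b ∈ G.neighborFinset a, G.degree b)
              ≤ ∑ b : V, G.degree b :=
                Finset.sum_le_sum_of_subset (Finset.subset_univ _)
            _ = 2 * e := hdeg
      _ = (2 * e) * (2 * e) := by rw [← Finset.sum_mul, hdeg]
  rw [hrw]
  calc (∑ p ∈ s, (G.neighborFinset p.1 ∩ G.neighborFinset p.2).card) ^ 2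
      ≤ s.card * ∑ p ∈ s, (G.neighborFinset p.1 ∩ G.neighborFinset p.2).card ^ 2 := hcs
    _ ≤ (2 * e) * ((2 * e) * (2 * e)) := by
        rw [hcard]; exact Nat.mul_le_mul_left _ hsum2
    _ = 8 * e ^ 3 := by ring
private lemma card_edge_irrel {V : Type} [Fintype V] (G : SimpleGraph V)
    (h1 h2 : Fintype G.edgeSet) :
    (@SimpleGraph.edgeFinset V G h1).card = (@SimpleGraph.edgeFinset V G h2).card := by
  cases Subsingleton.elim h1 h2
  rfl

private lemma amgm (a b : ℕ) : 2 * (a * b) ≤ a ^ 2 + b ^ 2 := by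
  rcases le_total a b with h | h
  · obtain ⟨d, rfl⟩ := Nat.exists_eq_add_of_le h
    nlinarith [sq_nonneg d]
  · obtain ⟨d, rfl⟩ := Nat.exists_eq_add_of_le h
    nlinarith [sq_nonneg d]

/-- If a red/blue edge-colored graph on `n` vertices has at least `(9/10)·n²/2` edges and
each color class spans at most `n²/4` edges, then for `n` sufficiently large it contains
a non-monochromatic triangle. -/
theorem stmt_9 :
    ∃ N : ℕ, ∀ n : ℕ, N ≤ n →
      ∀ (V : Type) [Fintype V] [DecidableEq V] (R B : SimpleGraph V),
        ∀ [DecidableRel R.Adj] [DecidableRel B.Adj],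
        Fintype.card V = n → Disjoint R B →
        9 * n ^ 2 ≤ 20 * (R ⊔ B).edgeFinset.card →
        4 * R.edgeFinset.card ≤ n ^ 2 →
        4 * B.edgeFinset.card ≤ n ^ 2 →
        ∃ a b c : V, (R ⊔ B).Adj a b ∧ (R ⊔ B).Adj b c ∧ (R ⊔ B).Adj a c ∧
          ¬ ((R.Adj a b ∧ R.Adj b c ∧ R.Adj a c) ∨
             (B.Adj a b ∧ B.Adj b c ∧ B.Adj a c)) := by
  refine ⟨1, fun n hn V _ _ R B _ _ hcard hdisj hG hR hB => ?_⟩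
  by_contra hcon
  push_neg at hcon
  have hmonoT : (∑ a : V, ∑ b ∈ (R ⊔ B).neighborFinset a,
        ((R ⊔ B).neighborFinset a ∩ (R ⊔ B).neighborFinset b).card)
      ≤ (∑ a : V, ∑ b ∈ R.neighborFinset a,
          (R.neighborFinset a ∩ R.neighborFinset b).card)
        + ∑ a : V, ∑ b ∈ B.neighborFinset a,
          (B.neighborFinset a ∩ B.neighborFinset b).card := by
    rw [← tri_eq (R ⊔ B), ← tri_eq R, ← tri_eq B]
    rw [← Finset.sum_add_distrib]
    refine Finset.sum_le_sum fun a _ => ?_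
    rw [← Finset.sum_add_distrib]
    refine Finset.sum_le_sum fun b _ => ?_
    rw [← Finset.sum_add_distrib]
    refine Finset.sum_le_sum fun c _ => ?_
    by_cases h : (R ⊔ B).Adj a b ∧ (R ⊔ B).Adj a c ∧ (R ⊔ B).Adj b c
    · rcases hcon a b c h.1 h.2.2 h.2.1 with hR' | hB'
      · rw [if_pos h, if_pos (show R.Adj a b ∧ R.Adj a c ∧ R.Adj b c from
          ⟨hR'.1, hR'.2.2, hR'.2.1⟩)]
        exact Nat.le_add_right 1 _
      · rw [if_pos h, if_pos (show B.Adj a b ∧ B.Adj a c ∧ B.Adj b c from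
          ⟨hB'.1, hB'.2.2, hB'.2.1⟩)]
        exact Nat.le_add_left 1 _
    · rw [if_neg h]
      exact Nat.zero_le _
  have hG' : 9 * n ^ 2 ≤ 20 * (R ⊔ B).edgeFinset.card := hG
  clear hG
  have hL0 := tri_lower (R ⊔ B)
  rw [hcard] at hL0
  rw [card_edge_irrel (R ⊔ B) ((R ⊔ B).fintypeEdgeSet) (R.fintypeEdgeSetSup B)] at hL0
  have hL := hL0
  clear hL0
  have hUR := tri_upper R
  have hUB := tri_upper B
  set TG := ∑ a : V, ∑ b ∈ (R ⊔ B).neighborFinset a,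
      ((R ⊔ B).neighborFinset a ∩ (R ⊔ B).neighborFinset b).card with hTG
  set TR := ∑ a : V, ∑ b ∈ R.neighborFinset a,
      (R.neighborFinset a ∩ R.neighborFinset b).card with hTR
  set TB := ∑ a : V, ∑ b ∈ B.neighborFinset a,
      (B.neighborFinset a ∩ B.neighborFinset b).card with hTB
  set eG := (R ⊔ B).edgeFinset.card with heG
  set eR := R.edgeFinset.card with heR
  set eB := B.edgeFinset.card with heB
  clear_value TG TR TB eG eR eB
  clear hcon hdisj hcard hTG hTR hTB heG heR heB
  -- arithmetic contradiction
  have s1 : 18 * n ^ 4 ≤ 25 * (n * TG) := by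
    nlinarith [hL, hG', Nat.mul_le_mul_left eG hG', Nat.mul_le_mul_left (n ^ 2) hG']
  have s2 : 18 * n ^ 3 ≤ 25 * TG := by
    have hpos : 0 < n := by omega
    have h2 : n * (18 * n ^ 3) ≤ n * (25 * TG) := by
      calc n * (18 * n ^ 3) = 18 * n ^ 4 := by ring
        _ ≤ 25 * (n * TG) := s1
        _ = n * (25 * TG) := by ring
    exact Nat.le_of_mul_le_mul_left h2 hpos
  have s3 : (18 * n ^ 3) ^ 2 ≤ (25 * TG) ^ 2 := Nat.pow_le_pow_left s2 2
  have s4 : TG ^ 2 ≤ (TR + TB) ^ 2 := Nat.pow_le_pow_left hmonoT 2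
  have s5 : 8 * TR ^ 2 ≤ n ^ 6 := by
    have c1 : (4 * eR) ^ 3 ≤ (n ^ 2) ^ 3 := Nat.pow_le_pow_left hR 3
    nlinarith [hUR, c1]
  have s6 : 8 * TB ^ 2 ≤ n ^ 6 := by
    have c1 : (4 * eB) ^ 3 ≤ (n ^ 2) ^ 3 := Nat.pow_le_pow_left hB 3
    nlinarith [hUB, c1]
  have s7 : 2 * (TR * TB) ≤ TR ^ 2 + TB ^ 2 := amgm TR TB
  have hn6 : 1 ≤ n ^ 6 := Nat.one_le_pow _ _ (by omega)
  nlinarith [s3, s4, s5, s6, s7, hn6]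
end

section
/- Any graph on n vertices with e edges contains at least e(4e − n²)/(3n) triangles. -/
/-!
For adjacent `u, v`, inclusion–exclusion on their neighbourhoods gives
`deg u + deg v ≤ n + codeg(u, v)`, and `codeg(u, v)` counts the triangles through `uv`.
Summing over the `2e` darts gives `2 ∑ deg² ≤ 2en + 6t`, while Cauchy–Schwarz gives
`(2e)² ≤ n ∑ deg²`; together `4e² ≤ en² + 3nt`.
-/

open Finset

namespace SimpleGraph

variable {V : Type*} [Fintype V] (G : SimpleGraph V) [DecidableRel G.Adj]

lemma sum_darts_fst {M : Type*} [AddCommMonoid M] (f : V → M) :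
    ∑ d : G.Dart, f d.fst = ∑ v, G.degree v • f v := by
  classical
  rw [← sum_fiberwise univ (·.fst)]
  refine sum_congr rfl fun v _ => ?_
  rw [sum_congr rfl fun d hd => congrArg f (mem_filter.1 hd).2, sum_const]
  congr 1
  convert G.dart_fst_fiber_card_eq_degree v

lemma sum_darts_snd {M : Type*} [AddCommMonoid M] (f : V → M) :
    ∑ d : G.Dart, f d.snd = ∑ v, G.degree v • f v := by
  rw [← sum_darts_fst]
  exact (Equiv.sum_comp (Dart.symm_involutive.toPerm _) fun d : G.Dart => f d.snd).symm

lemma sum_darts_degree_add_degree :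
    ∑ d : G.Dart, (G.degree d.fst + G.degree d.snd) = 2 * ∑ v, G.degree v ^ 2 := by
  rw [sum_add_distrib, G.sum_darts_fst fun v => G.degree v, G.sum_darts_snd fun v => G.degree v]
  simp only [smul_eq_mul, ← sq]
  ring

variable [DecidableEq V]

lemma degree_add_degree_le (u v : V) :
    G.degree u + G.degree v ≤ Fintype.card V + #(G.neighborFinset u ∩ G.neighborFinset v) := by
  rw [← card_neighborFinset_eq_degree, ← card_neighborFinset_eq_degree,
    ← card_union_add_card_inter]
  exact Nat.add_le_add_right (card_le_univ _) _

/-- A dart `uv` with a common neighbour `w` is sent to the triangle `{u, v, w}`; within a fixed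
triangle, `w` is determined by `(u, v)`, an ordered pair of distinct vertices of it. -/
lemma sum_darts_card_inter_neighborFinset_le :
    ∑ d : G.Dart, #(G.neighborFinset d.fst ∩ G.neighborFinset d.snd) ≤
      6 * #(G.cliqueFinset 3) := by
  rw [← card_sigma]
  refine card_le_mul_card_image_of_maps_to (f := fun x => {x.1.fst, x.1.snd, x.2}) ?_ 6 ?_
  · rintro ⟨d, w⟩ hw
    simp only [mem_sigma, mem_univ, true_and, mem_inter, mem_neighborFinset] at hw
    exact mem_cliqueFinset_iff.2 (is3Clique_triple_iff.2 ⟨d.adj, hw.1, hw.2⟩)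
  · intro s hs
    calc #{x ∈ univ.sigma _ | _} ≤ #s.offDiag := by
          refine card_le_card_of_injOn (fun x => x.1.toProd) ?_ ?_
          · rintro ⟨d, w⟩ hx
            obtain ⟨-, rfl⟩ := mem_filter.1 hx
            simp [d.adj.ne]
          · rintro ⟨d, w⟩ hx ⟨d', w'⟩ hx' hdd'
            obtain rfl := Dart.ext _ _ hdd'
            simp only [mem_coe, mem_filter, mem_sigma, mem_univ, true_and, mem_inter,
              mem_neighborFinset] at hx hx'
            have hw' : w' ∈ ({d.fst, d.snd, w} : Finset V) := hx.2 ▸ hx'.2 ▸ by simp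
            simp only [mem_insert, mem_singleton, hx'.1.1.ne', hx'.1.2.ne', false_or] at hw'
            rw [hw']
      _ = 6 := by simp [offDiag_card, (mem_cliqueFinset_iff.1 hs).card_eq]

lemma sum_degree_sq_le :
    ∑ v, G.degree v ^ 2 ≤ #G.edgeFinset * Fintype.card V + 3 * #(G.cliqueFinset 3) := by
  have h := sum_le_sum (s := univ) fun (d : G.Dart) _ => G.degree_add_degree_le d.fst d.snd
  rw [sum_darts_degree_add_degree, sum_add_distrib, sum_const, card_univ,
    dart_card_eq_twice_card_edges, smul_eq_mul] at h
  linarith [G.sum_darts_card_inter_neighborFinset_le]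

lemma sq_card_edgeFinset_le :
    4 * #G.edgeFinset ^ 2 ≤
      Fintype.card V ^ 2 * #G.edgeFinset + 3 * Fintype.card V * #(G.cliqueFinset 3) := by
  have cauchy_schwarz := sq_sum_le_card_mul_sum_sq (s := univ) (f := fun v => G.degree v)
  rw [sum_degrees_eq_twice_card_edges, card_univ] at cauchy_schwarz
  nlinarith [Nat.mul_le_mul_left (Fintype.card V) G.sum_degree_sq_le]

end SimpleGraph

/-- A graph on `n` vertices with `e` edges contains at least `e(4e - n²)/(3n)` triangles. -/
theorem stmt_10 {V : Type*} [Fintype V] [DecidableEq V] (G : SimpleGraph V)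
    [DecidableRel G.Adj] (n e : ℕ) (hn : n = Fintype.card V)
    (he : e = G.edgeFinset.card) :
    (e : ℝ) * (4 * e - n ^ 2) / (3 * n) ≤ (G.cliqueFinset 3).card := by
  have key : ((4 * e ^ 2 : ℕ) : ℝ) ≤ ((n ^ 2 * e + 3 * n * #(G.cliqueFinset 3) : ℕ) : ℝ) := by
    subst hn he
    exact_mod_cast G.sq_card_edgeFinset_le
  push_cast at key
  rcases (Nat.zero_le n).eq_or_lt with rfl | hn0
  · simp
  · rw [div_le_iff₀ (by positivity)]
    linarith
end

section
/- Let G be a graph on n vertices. If a uniformly random permutation of the vertices is chosen and S is the set of vertices that appear before all of their non-neighbors in the permutation, then S induces a clique in G, and the expected size of S equals Σ_{v ∈ V(G)} 1/(n − d(v)), where d(v) is the degree of v. -/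
open Finset

/-- Given an ordering `σ : V ≃ Fin n` of the vertices, the set of vertices appearing
before all of their non-neighbors. -/
def beforeNonNbrs {V : Type*} [Fintype V] [DecidableEq V] (G : SimpleGraph V)
    [DecidableRel G.Adj] {n : ℕ} (σ : V ≃ Fin n) : Finset V :=
  Finset.univ.filter (fun v => ∀ u : V, u ≠ v → ¬ G.Adj v u → σ v < σ u)

/-- Closed non-neighborhood of `v` (includes `v` itself). -/
def nonNbrs {V : Type*} [Fintype V] [DecidableEq V] (G : SimpleGraph V)
    [DecidableRel G.Adj] (v : V) : Finset V :=
  Finset.univ.filter (fun u => ¬ G.Adj v u)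

lemma self_mem_nonNbrs {V : Type*} [Fintype V] [DecidableEq V] (G : SimpleGraph V)
    [DecidableRel G.Adj] (v : V) : v ∈ nonNbrs G v := by
  simp [nonNbrs]

lemma card_nonNbrs {V : Type*} [Fintype V] [DecidableEq V] (G : SimpleGraph V)
    [DecidableRel G.Adj] (v : V) :
    (nonNbrs G v).card = Fintype.card V - G.degree v := by
  have h : nonNbrs G v = (G.neighborFinset v)ᶜ := by
    ext u
    simp [nonNbrs]
  rw [h, Finset.card_compl, SimpleGraph.card_neighborFinset_eq_degree]

/-- The number of orderings for which `w ∈ nonNbrs G v` is the strict minimum of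
`nonNbrs G v` equals the number for which `v` is. -/
lemma card_min_swap {V : Type*} [Fintype V] [DecidableEq V] (G : SimpleGraph V)
    [DecidableRel G.Adj] {n : ℕ} (v w : V) (hw : w ∈ nonNbrs G v) :
    (univ.filter fun σ : V ≃ Fin n => ∀ u ∈ nonNbrs G v, u ≠ w → σ w < σ u).card
    = (univ.filter fun σ : V ≃ Fin n => ∀ u ∈ nonNbrs G v, u ≠ v → σ v < σ u).card := by
  have hv : v ∈ nonNbrs G v := self_mem_nonNbrs G v
  have hswapmem : ∀ u ∈ nonNbrs G v, Equiv.swap v w u ∈ nonNbrs G v := by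
    intro u hu
    rcases eq_or_ne u v with rfl | huv
    · simpa [Equiv.swap_apply_left] using hw
    rcases eq_or_ne u w with rfl | huw
    · simpa [Equiv.swap_apply_right] using hv
    · simpa [Equiv.swap_apply_of_ne_of_ne huv huw] using hu
  apply Finset.card_bij' (fun σ _ => (Equiv.swap v w).trans σ)
    (fun σ _ => (Equiv.swap v w).trans σ)
  · intro σ hσ
    simp only [mem_filter, mem_univ, true_and] at hσ ⊢
    intro u hu huv
    have h1 : Equiv.swap v w u ∈ nonNbrs G v := hswapmem u hu
    have h2 : Equiv.swap v w u ≠ w := by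
      intro h
      apply huv
      have := congrArg (Equiv.swap v w) h
      simpa [Equiv.swap_apply_right] using this
    have := hσ _ h1 h2
    simpa [Equiv.trans_apply, Equiv.swap_apply_left] using this
  · intro σ hσ
    simp only [mem_filter, mem_univ, true_and] at hσ ⊢
    intro u hu huw
    have h1 : Equiv.swap v w u ∈ nonNbrs G v := hswapmem u hu
    have h2 : Equiv.swap v w u ≠ v := by
      intro h
      apply huw
      have := congrArg (Equiv.swap v w) h
      simpa [Equiv.swap_apply_left] using this
    have := hσ _ h1 h2
    simpa [Equiv.trans_apply, Equiv.swap_apply_right] using this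
  · intro σ _
    ext x
    simp [Equiv.trans_apply, Equiv.swap_apply_self]
  · intro σ _
    ext x
    simp [Equiv.trans_apply, Equiv.swap_apply_self]

/-- For each ordering, exactly one vertex of `nonNbrs G v` is its strict minimum. -/
lemma unique_min {V : Type*} [Fintype V] [DecidableEq V] (G : SimpleGraph V)
    [DecidableRel G.Adj] {n : ℕ} (v : V) (σ : V ≃ Fin n) :
    ((nonNbrs G v).filter fun w => ∀ u ∈ nonNbrs G v, u ≠ w → σ w < σ u).card = 1 := by
  obtain ⟨w, hwT, hmin⟩ := (nonNbrs G v).exists_min_image σ ⟨v, self_mem_nonNbrs G v⟩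
  rw [Finset.card_eq_one]
  refine ⟨w, ?_⟩
  ext w'
  simp only [mem_filter, mem_singleton]
  constructor
  · rintro ⟨hw', hP⟩
    by_contra hne
    exact absurd (hP w hwT (Ne.symm hne)) (not_lt.2 (hmin w' hw'))
  · rintro rfl
    refine ⟨hwT, fun u hu huw => ?_⟩
    exact lt_of_le_of_ne (hmin u hu) (fun h => huw (σ.injective h.symm))

lemma sum_over_min {V : Type*} [Fintype V] [DecidableEq V] (G : SimpleGraph V)
    [DecidableRel G.Adj] {n : ℕ} (v : V) :
    ∑ w ∈ nonNbrs G v,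
      (univ.filter fun σ : V ≃ Fin n => ∀ u ∈ nonNbrs G v, u ≠ w → σ w < σ u).card
    = Fintype.card (V ≃ Fin n) := by
  classical
  calc ∑ w ∈ nonNbrs G v,
        (univ.filter fun σ : V ≃ Fin n => ∀ u ∈ nonNbrs G v, u ≠ w → σ w < σ u).card
      = ∑ w ∈ nonNbrs G v, ∑ σ : V ≃ Fin n,
          (if ∀ u ∈ nonNbrs G v, u ≠ w → σ w < σ u then 1 else 0) := by
        simp only [Finset.card_filter]
    _ = ∑ σ : V ≃ Fin n, ∑ w ∈ nonNbrs G v,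
          (if ∀ u ∈ nonNbrs G v, u ≠ w → σ w < σ u then 1 else 0) := Finset.sum_comm
    _ = ∑ σ : V ≃ Fin n,
          ((nonNbrs G v).filter fun w => ∀ u ∈ nonNbrs G v, u ≠ w → σ w < σ u).card := by
        simp only [Finset.card_filter]
    _ = ∑ σ : V ≃ Fin n, 1 := by
        refine Finset.sum_congr rfl fun σ _ => unique_min G v σ
    _ = Fintype.card (V ≃ Fin n) := by simp

lemma sum_card_eq {V : Type*} [Fintype V] [DecidableEq V] (G : SimpleGraph V)
    [DecidableRel G.Adj] (n : ℕ) :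
    ∑ σ : V ≃ Fin n, (beforeNonNbrs G σ).card
    = ∑ v : V, (univ.filter fun σ : V ≃ Fin n =>
        ∀ u ∈ nonNbrs G v, u ≠ v → σ v < σ u).card := by
  have hiff : ∀ (σ : V ≃ Fin n) (v : V),
      (∀ u : V, u ≠ v → ¬ G.Adj v u → σ v < σ u) ↔
      (∀ u ∈ nonNbrs G v, u ≠ v → σ v < σ u) := by
    intro σ v
    constructor
    · intro h u hu huv
      exact h u huv (by simpa [nonNbrs] using hu)
    · intro h u huv hadj
      exact h u (by simpa [nonNbrs] using hadj) huv
  calc ∑ σ : V ≃ Fin n, (beforeNonNbrs G σ).card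
      = ∑ σ : V ≃ Fin n, ∑ v : V,
          (if ∀ u : V, u ≠ v → ¬ G.Adj v u → σ v < σ u then 1 else 0) := by
        simp only [beforeNonNbrs, Finset.card_filter]
    _ = ∑ v : V, ∑ σ : V ≃ Fin n,
          (if ∀ u ∈ nonNbrs G v, u ≠ v → σ v < σ u then 1 else 0) := by
        rw [Finset.sum_comm]
        refine Finset.sum_congr rfl fun v _ => Finset.sum_congr rfl fun σ _ => ?_
        simp only [hiff σ v]
    _ = ∑ v : V, (univ.filter fun σ : V ≃ Fin n =>
          ∀ u ∈ nonNbrs G v, u ≠ v → σ v < σ u).card := by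
        simp only [Finset.card_filter]

/-- For a uniformly random ordering of the vertices, the set `S` of vertices appearing
before all of their non-neighbors induces a clique, and `E[|S|] = Σ_v 1/(n - d(v))`. -/
theorem stmt_11 {V : Type*} [Fintype V] [DecidableEq V] (G : SimpleGraph V)
    [DecidableRel G.Adj] (n : ℕ) (hn : n = Fintype.card V) :
    (∀ σ : V ≃ Fin n, ∀ a ∈ beforeNonNbrs G σ, ∀ b ∈ beforeNonNbrs G σ,
      a ≠ b → G.Adj a b) ∧
    (∑ σ : V ≃ Fin n, ((beforeNonNbrs G σ).card : ℝ)) / (Fintype.card (V ≃ Fin n)) =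
      ∑ v : V, 1 / ((n : ℝ) - G.degree v) := by
  constructor
  · intro σ a ha b hb hab
    simp only [beforeNonNbrs, mem_filter, mem_univ, true_and] at ha hb
    by_contra h
    have h1 := ha b (Ne.symm hab) h
    have h2 := hb a hab (fun h' => h h'.symm)
    exact absurd (h1.trans h2) (lt_irrefl _)
  · have hN : (0 : ℝ) < Fintype.card (V ≃ Fin n) :=
      Nat.cast_pos.2 (Fintype.card_pos_iff.2 ⟨Fintype.equivFinOfCardEq hn.symm⟩)
    have hd : ∀ v : V, G.degree v ≤ n := fun v => hn ▸ (G.degree_lt_card_verts v).le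
    -- per-vertex count
    have key : ∀ v : V,
        ((univ.filter fun σ : V ≃ Fin n =>
          ∀ u ∈ nonNbrs G v, u ≠ v → σ v < σ u).card : ℝ)
        = (Fintype.card (V ≃ Fin n) : ℝ) / ((n : ℝ) - G.degree v) := by
      intro v
      have hsum := sum_over_min G (n := n) v
      rw [Finset.sum_congr rfl (fun w hw => card_min_swap G (n := n) v w hw),
        Finset.sum_const, smul_eq_mul] at hsum
      have hcardT : ((nonNbrs G v).card : ℝ) = (n : ℝ) - G.degree v := by
        rw [card_nonNbrs, ← hn, Nat.cast_sub (hd v)]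
      have hTpos : (0 : ℝ) < ((nonNbrs G v).card : ℝ) :=
        Nat.cast_pos.2 (Finset.card_pos.2 ⟨v, self_mem_nonNbrs G v⟩)
      rw [← hcardT]
      field_simp
      rw [mul_comm]
      exact_mod_cast hsum
    calc (∑ σ : V ≃ Fin n, ((beforeNonNbrs G σ).card : ℝ)) / (Fintype.card (V ≃ Fin n))
        = (∑ v : V, ((univ.filter fun σ : V ≃ Fin n =>
            ∀ u ∈ nonNbrs G v, u ≠ v → σ v < σ u).card : ℝ)) /
            (Fintype.card (V ≃ Fin n)) := by
          congr 1
          exact_mod_cast sum_card_eq G n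
      _ = ∑ v : V, 1 / ((n : ℝ) - G.degree v) := by
          rw [Finset.sum_congr rfl (fun v _ => key v), Finset.sum_div]
          refine Finset.sum_congr rfl fun v _ => ?_
          have hdv : ((n : ℝ) - G.degree v) ≠ 0 := by
            have : (0:ℝ) < (n : ℝ) - G.degree v := by
              have hcardT : ((nonNbrs G v).card : ℝ) = (n : ℝ) - G.degree v := by
                rw [card_nonNbrs, ← hn, Nat.cast_sub (hd v)]
              rw [← hcardT]
              exact Nat.cast_pos.2 (Finset.card_pos.2 ⟨v, self_mem_nonNbrs G v⟩)
            linarith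
          field_simp
end

section
/- Consider a cycle of even length 2k (k ≥ 2) whose edges are colored so that colors alternate in blocks of two: two consecutive red edges, then two consecutive blue edges, and so on (so 2k is divisible by 4). Then this colored cycle is inevitable: for all sufficiently large t it embeds into the colored complete graph K_{2t} in which one color class is a clique of size t (Type 1), and also into the K_{2t} in which one color class is two disjoint cliques of size t (Type 2). -/
/-- The red edges of a Type 1 `t`-graph on `Fin (2t)`: a red clique on the first `t`
vertices. -/
def type1Red (t : ℕ) : SimpleGraph (Fin (2 * t)) :=
  SimpleGraph.fromRel (fun x y => x.val < t ∧ y.val < t)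

/-- The blue edges of a Type 1 `t`-graph on `Fin (2t)`: all remaining edges. -/
def type1Blue (t : ℕ) : SimpleGraph (Fin (2 * t)) :=
  SimpleGraph.fromRel (fun x y => ¬ (x.val < t ∧ y.val < t))

/-- The red edges of a Type 2 `t`-graph on `Fin (2t)`: two disjoint red `t`-cliques. -/
def type2Red (t : ℕ) : SimpleGraph (Fin (2 * t)) :=
  SimpleGraph.fromRel (fun x y => (x.val < t ↔ y.val < t))

/-- The blue edges of a Type 2 `t`-graph on `Fin (2t)`: the complete bipartite graph
between the two `t`-sets. -/
def type2Blue (t : ℕ) : SimpleGraph (Fin (2 * t)) :=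
  SimpleGraph.fromRel (fun x y => ¬ (x.val < t ↔ y.val < t))

/-- The red edges of the cycle on `Fin n` (edge `{i, i+1}` red iff `i % 4 < 2`),
so that colors alternate in blocks of two when `4 ∣ n`. -/
def cycleRed (n : ℕ) : SimpleGraph (Fin n) :=
  SimpleGraph.fromRel (fun i j => j.val = (i.val + 1) % n ∧ i.val % 4 < 2)

/-- The blue edges of the cycle on `Fin n` (edge `{i, i+1}` blue iff `i % 4 ≥ 2`). -/
def cycleBlue (n : ℕ) : SimpleGraph (Fin n) :=
  SimpleGraph.fromRel (fun i j => j.val = (i.val + 1) % n ∧ 2 ≤ i.val % 4)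

/-- A cycle of length `4k` whose coloring alternates between two red edges and two blue
edges is inevitable: for all sufficiently large `t` it embeds (respecting colors) into
both a Type 1 and a Type 2 `t`-graph. -/
theorem stmt_15 (k : ℕ) (hk : 1 ≤ k) :
    ∃ T : ℕ, ∀ t : ℕ, T ≤ t →
      (∃ f : Fin (4 * k) → Fin (2 * t), Function.Injective f ∧
        (∀ i j, (cycleRed (4 * k)).Adj i j → (type1Red t).Adj (f i) (f j)) ∧
        (∀ i j, (cycleBlue (4 * k)).Adj i j → (type1Blue t).Adj (f i) (f j))) ∧
      (∃ g : Fin (4 * k) → Fin (2 * t), Function.Injective g ∧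
        (∀ i j, (cycleRed (4 * k)).Adj i j → (type2Red t).Adj (g i) (g j)) ∧
        (∀ i j, (cycleBlue (4 * k)).Adj i j → (type2Blue t).Adj (g i) (g j))) := by
  refine ⟨3 * k, fun t ht => ?_⟩
  have hfb : ∀ i : Fin (4 * k),
      (if i.val % 4 = 3 then t + i.val / 4 else 3 * (i.val / 4) + i.val % 4) < 2 * t := by
    intro i; have := i.isLt; split <;> omega
  set f : Fin (4 * k) → Fin (2 * t) :=
    fun i => ⟨if i.val % 4 = 3 then t + i.val / 4 else 3 * (i.val / 4) + i.val % 4, hfb i⟩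
    with hfdef
  have hval : ∀ i, (f i).val =
      if i.val % 4 = 3 then t + i.val / 4 else 3 * (i.val / 4) + i.val % 4 := fun i => rfl
  have hinj : Function.Injective f := by
    intro i j h
    have h' : (f i).val = (f j).val := congrArg Fin.val h
    rw [hval, hval] at h'
    have hi := i.isLt; have hj := j.isLt
    apply Fin.ext
    split_ifs at h' <;> omega
  have hmod : ∀ i j : Fin (4 * k), j.val = (i.val + 1) % (4 * k) →
      j.val % 4 = (i.val + 1) % 4 := by
    intro i j h
    rw [h, Nat.mod_mod_of_dvd _ ⟨k, rfl⟩]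
  have hne : ∀ i j : Fin (4 * k), i ≠ j → f i ≠ f j := fun i j h hh => h (hinj hh)
  have hred : ∀ i j, (cycleRed (4 * k)).Adj i j → (f i).val < t ∧ (f j).val < t := by
    intro i j hij
    rw [cycleRed, SimpleGraph.fromRel_adj] at hij
    have hi := i.isLt; have hj := j.isLt
    obtain ⟨_, h | h⟩ := hij
    · have hm := hmod i j h.1; have h2 := h.2
      rw [hval, hval]; split_ifs <;> omega
    · have hm := hmod j i h.1; have h2 := h.2
      rw [hval, hval]; split_ifs <;> omega
  have hblue : ∀ i j, (cycleBlue (4 * k)).Adj i j →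
      ((f i).val < t ∧ t ≤ (f j).val) ∨ ((f j).val < t ∧ t ≤ (f i).val) := by
    intro i j hij
    rw [cycleBlue, SimpleGraph.fromRel_adj] at hij
    have hi := i.isLt; have hj := j.isLt
    obtain ⟨_, h | h⟩ := hij
    · have hm := hmod i j h.1; have h2 := h.2
      rw [hval, hval]; split_ifs <;> omega
    · have hm := hmod j i h.1; have h2 := h.2
      rw [hval, hval]; split_ifs <;> omega
  refine ⟨⟨f, hinj, ?_, ?_⟩, ⟨f, hinj, ?_, ?_⟩⟩
  · intro i j hij
    rw [type1Red, SimpleGraph.fromRel_adj]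
    exact ⟨hne i j hij.ne, Or.inl (hred i j hij)⟩
  · intro i j hij
    rw [type1Blue, SimpleGraph.fromRel_adj]
    refine ⟨hne i j hij.ne, Or.inl ?_⟩
    rcases hblue i j hij with h | h <;> omega
  · intro i j hij
    rw [type2Red, SimpleGraph.fromRel_adj]
    have h := hred i j hij
    exact ⟨hne i j hij.ne, Or.inl (iff_of_true h.1 h.2)⟩
  · intro i j hij
    rw [type2Blue, SimpleGraph.fromRel_adj]
    refine ⟨hne i j hij.ne, Or.inl fun hiff => ?_⟩
    rcases hblue i j hij with h | h <;> omega
end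

section
/- Let H be a bicolored graph admitting a vertex partition V(H) = L ⊔ R such that all edges inside L and inside R are red, all edges between L and R are blue, and H contains no path on three edges colored red-blue-red (in order along the path). Then H embeds into a Type 1 unavoidable t-graph for all sufficiently large t, i.e., into K_{2t} with one color class being a t-clique. -/
/-- If a bicolored graph `H` (red edges `Hr`, blue edges `Hb`) has a vertex partition
`L ⊔ Lᶜ` with all edges inside the two sides red and all edges across blue, and `H` has
no red-blue-red path on three edges, then `H` embeds into a Type 1 unavoidable
`t`-graph for all sufficiently large `t`. -/
theorem stmt_16 {V : Type*} [Fintype V] (Hr Hb : SimpleGraph V)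
    (hdisj : ∀ x y : V, ¬ (Hr.Adj x y ∧ Hb.Adj x y))
    (L : Set V)
    (hred : ∀ x y : V, Hr.Adj x y → (x ∈ L ↔ y ∈ L))
    (hblue : ∀ x y : V, Hb.Adj x y → ¬ (x ∈ L ↔ y ∈ L))
    (hnoRBR : ¬ ∃ v0 v1 v2 v3 : V, v0 ≠ v2 ∧ v0 ≠ v3 ∧ v1 ≠ v3 ∧
      Hr.Adj v0 v1 ∧ Hb.Adj v1 v2 ∧ Hr.Adj v2 v3) :
    ∃ T : ℕ, ∀ t : ℕ, T ≤ t →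
      ∃ f : V → Fin (2 * t), Function.Injective f ∧
        (∀ x y, Hr.Adj x y → (type1Red t).Adj (f x) (f y)) ∧
        (∀ x y, Hb.Adj x y → (type1Blue t).Adj (f x) (f y)) := by
  classical
  refine ⟨Fintype.card V, fun t ht => ?_⟩
  set n := Fintype.card V with hn
  let e := Fintype.equivFin V
  have he : ∀ v : V, (e v : ℕ) < t := fun v =>
    lt_of_lt_of_le (e v).isLt ht
  let S : Set V := {v | ∃ u, Hr.Adj v u}
  -- key: no blue edge has both endpoints in S
  have key : ∀ x y : V, Hb.Adj x y → ¬ (x ∈ S ∧ y ∈ S) := by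
    rintro x y hb ⟨⟨u, hu⟩, ⟨w, hw⟩⟩
    apply hnoRBR
    refine ⟨u, x, y, w, ?_, ?_, ?_, hu.symm, hb, hw⟩
    · rintro rfl; exact hdisj x u ⟨hu, hb⟩
    · rintro rfl
      have h1 := hred x u hu
      have h2 := hred y u hw
      exact hblue x y hb (h1.trans h2.symm)
    · rintro rfl; exact hdisj y x ⟨hw, hb.symm⟩
  let f : V → Fin (2 * t) := fun v =>
    if v ∈ S then ⟨e v, by have := he v; omega⟩ else ⟨t + e v, by have := he v; omega⟩
  have hval : ∀ v, (f v : ℕ) = if v ∈ S then (e v : ℕ) else t + e v := by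
    intro v; simp only [f]; split <;> rfl
  have hinj : Function.Injective f := by
    intro a b hab
    have h := congrArg (Fin.val) hab
    rw [hval, hval] at h
    have ha := he a; have hb := he b
    by_cases h1 : a ∈ S <;> by_cases h2 : b ∈ S <;> simp [h1, h2] at h <;>
      first
        | exact e.injective (Fin.ext h)
        | omega
  refine ⟨f, hinj, ?_, ?_⟩
  · intro x y hxy
    have hx : x ∈ S := ⟨y, hxy⟩
    have hy : y ∈ S := ⟨x, hxy.symm⟩
    have hne : f x ≠ f y := fun h => hxy.ne (hinj h)
    refine ⟨hne, Or.inl ⟨?_, ?_⟩⟩ <;> rw [hval] <;> simp [hx, hy, he]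
  · intro x y hxy
    have hne : f x ≠ f y := fun h => hxy.ne (hinj h)
    have hns := key x y hxy
    refine ⟨hne, Or.inl ?_⟩
    rintro ⟨h1, h2⟩
    rw [hval] at h1 h2
    by_cases hx : x ∈ S <;> by_cases hy : y ∈ S <;>
      simp [hx, hy] at h1 h2 <;> first | exact hns ⟨hx, hy⟩ | omega
end

section
/- Let G be a bicolored graph on vertex set V = R ⊔ B ⊔ M where R is the set of non-isolated vertices incident only to red edges, B the set of non-isolated vertices incident only to blue edges, and M the vertices incident to both colors. If G contains no handle and no non-monochromatic triangle, and R induces a complete multipartite graph with parts R_1,...,R_k (k ≥ 2) in which the vertices within each part R_i are pairwise non-adjacent twins (identical neighborhoods), then for all i ≠ j, N(R_i) ∩ N(R_j) ∩ M = ∅; consequently every vertex of M has neighbors in at most one part R_i. -/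
/-- In a handle-free, non-monochromatic-triangle-free bicolored graph, if the set `R` of
vertices incident only to red edges induces a complete multipartite graph whose parts
consist of pairwise non-adjacent twins, then no vertex of `M` (the vertices incident to
both colors) has neighbors in two different parts. -/
theorem stmt_18 {V : Type*} (red blue : SimpleGraph V)
    (hdisj : ∀ x y : V, ¬ (red.Adj x y ∧ blue.Adj x y))
    (hNoNonMono : ∀ a b c : V,
      (red ⊔ blue).Adj a b → (red ⊔ blue).Adj b c → (red ⊔ blue).Adj a c →
      (red.Adj a b ∧ red.Adj b c ∧ red.Adj a c) ∨
      (blue.Adj a b ∧ blue.Adj b c ∧ blue.Adj a c))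
    (hNoHandleR : ∀ a b c x : V, red.Adj a b → red.Adj b c → red.Adj a c → ¬ blue.Adj a x)
    (hNoHandleB : ∀ a b c x : V, blue.Adj a b → blue.Adj b c → blue.Adj a c → ¬ red.Adj a x)
    (k : ℕ) (hk : 2 ≤ k) (P : Fin k → Set V)
    (hpart : {v : V | (∃ x, red.Adj v x) ∧ ∀ y, ¬ blue.Adj v y} = ⋃ i, P i)
    (hpairwise : ∀ i j : Fin k, i ≠ j → Disjoint (P i) (P j))
    (hnonadjParts : ∀ i : Fin k, ∀ u ∈ P i, ∀ v ∈ P i, ¬ (red ⊔ blue).Adj u v)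
    (htwins : ∀ i : Fin k, ∀ u ∈ P i, ∀ v ∈ P i, ∀ w : V,
      ((red ⊔ blue).Adj u w ↔ (red ⊔ blue).Adj v w))
    (hcross : ∀ i j : Fin k, i ≠ j → ∀ u ∈ P i, ∀ v ∈ P j, (red ⊔ blue).Adj u v) :
    ∀ i j : Fin k, i ≠ j →
      {w : V | ((∃ x, red.Adj w x) ∧ (∃ y, blue.Adj w y)) ∧
        (∃ u ∈ P i, (red ⊔ blue).Adj u w) ∧ (∃ v ∈ P j, (red ⊔ blue).Adj v w)} = ∅ := by
  intro i j hij
  ext w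
  simp only [Set.mem_setOf_eq, Set.mem_empty_iff_false, iff_false]
  rintro ⟨⟨⟨x, hx⟩, ⟨y, hy⟩⟩, ⟨u, hu, huw⟩, ⟨v, hv, hvw⟩⟩
  -- u and v are in R
  have hR : ∀ z : V, z ∈ {v : V | (∃ x, red.Adj v x) ∧ ∀ y, ¬ blue.Adj v y} ↔
      z ∈ ⋃ i, P i := fun z => by rw [hpart]
  have huR : (∃ x, red.Adj u x) ∧ ∀ y, ¬ blue.Adj u y :=
    (hR u).mpr (Set.mem_iUnion.mpr ⟨i, hu⟩)
  have hvR : (∃ x, red.Adj v x) ∧ ∀ y, ¬ blue.Adj v y :=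
    (hR v).mpr (Set.mem_iUnion.mpr ⟨j, hv⟩)
  -- edges from u and v are red
  have huwr : red.Adj u w := by
    cases huw with
    | inl h => exact h
    | inr h => exact absurd h (huR.2 w)
  have hvwr : red.Adj v w := by
    cases hvw with
    | inl h => exact h
    | inr h => exact absurd h (hvR.2 w)
  have huv : (red ⊔ blue).Adj u v := hcross i j hij u hu v hv
  have huvr : red.Adj u v := by
    cases huv with
    | inl h => exact h
    | inr h => exact absurd h (huR.2 v)
  -- red triangle w, u, v with blue edge w-y : a handle
  exact hNoHandleR w u v y huwr.symm huvr hvwr.symm hy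
end
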